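/- arXiv:1807.06922 — 2 statements merged into one kernel-verified Lean document; each statement's English description precedes it below -/
import Mathlib

section
/- Let (A_n, d_i, s_i) be a simplicial abelian group with a compatible symmetric structure: each A_n carries an S_{n+1}-action generated by involutions t_i satisfying the mixed relations d_j t_i = t_i d_j (i < j−1), d_i t_i = d_{i+1}, d_j t_i = t_{i−1} d_j (i > j), and t_i s_i = s_i. Then the subgroup B_n = ⟨α(a) − sgn(α)·a : a ∈ A_n, α ∈ S_{n+1}⟩ is preserved by the boundary ∂ = Σ(−1)^i d_i, i.e., ∂(B_n) ⊆ B_{n−1}. -/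
/-!
The boundary `∂` is sign-equivariant modulo `B_{n-1}`: `∂ (α a) - sgn α • ∂ a ∈ B_{n-1}` for every
permutation `α`, which gives `∂ B_n ⊆ B_{n-1}` at once. The permutations with this property form a
submonoid, so it suffices to treat the adjacent transpositions `t_i`, where the claim reads
`∂ (t_i a) + ∂ a ∈ B_{n-1}`. In that alternating sum the terms of index `i` and `i + 1` cancel
because `d_i t_i = d_{i+1}` and `d_{i+1} t_i = d_i`, and every other term is of the form
`t (d_j a) + d_j a` for an adjacent transposition `t`, which lies in `B_{n-1}`.
-/

open Finset

section SignRelations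

variable {ι M N : Type*} [DecidableEq ι] [Fintype ι] [AddCommGroup M] [AddCommGroup N]

/-- The subgroup `B_n` of the statement, for `ρ = g n`. -/
def signRelations (ρ : Equiv.Perm ι → (M →+ M)) : AddSubgroup M :=
  AddSubgroup.closure {b | ∃ (a : M) (α : Equiv.Perm ι), b = ρ α a - (Equiv.Perm.sign α : ℤ) • a}

theorem sub_sign_smul_mem_signRelations (ρ : Equiv.Perm ι → (M →+ M)) (α : Equiv.Perm ι) (a : M) :
    ρ α a - (Equiv.Perm.sign α : ℤ) • a ∈ signRelations ρ :=
  AddSubgroup.subset_closure ⟨a, α, rfl⟩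

theorem swap_apply_add_mem_signRelations (ρ : Equiv.Perm ι → (M →+ M)) {i j : ι} (hij : i ≠ j)
    (a : M) : ρ (Equiv.swap i j) a + a ∈ signRelations ρ := by
  simpa [Equiv.Perm.sign_swap hij] using sub_sign_smul_mem_signRelations ρ (Equiv.swap i j) a

theorem map_signRelations_le (ρ : Equiv.Perm ι → (M →+ M)) (f : M →+ N) (H : AddSubgroup N)
    (hf : ∀ α a, f (ρ α a) - (Equiv.Perm.sign α : ℤ) • f a ∈ H) :
    (signRelations ρ).map f ≤ H := by
  rw [signRelations, AddMonoidHom.map_closure, AddSubgroup.closure_le]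
  rintro _ ⟨_, ⟨a, α, rfl⟩, rfl⟩
  rw [SetLike.mem_coe, map_sub, map_zsmul]
  exact hf α a

theorem sub_units_smul_mem_of_mem_closure {G M N : Type*} [Monoid G] [AddCommGroup M]
    [AddCommGroup N] (χ : G →* ℤˣ) (ρ : G → (M →+ M)) (hone : ρ 1 = AddMonoidHom.id M)
    (hmul : ∀ α β, ρ (α * β) = (ρ α).comp (ρ β)) (f : M →+ N) (H : AddSubgroup N) {S : Set G}
    (hS : ∀ α ∈ S, ∀ a, f (ρ α a) - (χ α : ℤ) • f a ∈ H) {α : G} (hα : α ∈ Submonoid.closure S)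
    (a : M) : f (ρ α a) - (χ α : ℤ) • f a ∈ H := by
  induction hα using Submonoid.closure_induction generalizing a with
  | mem β hβ => exact hS β hβ a
  | one => simp [hone]
  | mul β γ _ _ hβ hγ =>
    have hsplit : f (ρ (β * γ) a) - (χ (β * γ) : ℤ) • f a
        = (f (ρ β (ρ γ a)) - (χ β : ℤ) • f (ρ γ a))
          + (χ β : ℤ) • (f (ρ γ a) - (χ γ : ℤ) • f a) := by
      rw [hmul, AddMonoidHom.comp_apply, map_mul, Units.val_mul, mul_smul, smul_sub]
      abel
    rw [hsplit]
    exact H.add_mem (hβ _) (H.zsmul_mem (hγ _) _)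

theorem add_mem_signRelations_of_comp_eq_swap_comp (σ : Equiv.Perm ι → (N →+ N)) (f : M →+ N)
    (t : M →+ M) {p q : ι} (hpq : p ≠ q) (hf : f.comp t = (σ (Equiv.swap p q)).comp f) (a : M) :
    f (t a) + f a ∈ signRelations σ := by
  rw [← AddMonoidHom.comp_apply, hf, AddMonoidHom.comp_apply]
  exact swap_apply_add_mem_signRelations σ hpq (f a)

end SignRelations

theorem alternating_sum_apply_add_mem_of_comp_eq {M N : Type*} [AddCommGroup M] [AddCommGroup N]
    (H : AddSubgroup N) (f : ℕ → (M →+ N)) (t : M →+ M) {n i : ℕ} (hi : i + 1 < n)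
    (ht : t.comp t = AddMonoidHom.id M) (hface : (f i).comp t = f (i + 1))
    (hH : ∀ j < n, j ≠ i → j ≠ i + 1 → ∀ a, f j (t a) + f j a ∈ H) (a : M) :
    (∑ j ∈ range n, (-1 : ℤ) ^ j • f j) (t a) + (∑ j ∈ range n, (-1 : ℤ) ^ j • f j) a ∈ H := by
  have hface' : (f (i + 1)).comp t = f i := by
    rw [← hface, AddMonoidHom.comp_assoc, ht, AddMonoidHom.comp_id]
  set z : ℕ → N := fun j ↦ (-1 : ℤ) ^ j • (f j (t a) + f j a)
  have hcancel : z i + z (i + 1) = 0 := by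
    simp only [z, ← AddMonoidHom.comp_apply, hface, hface', pow_succ, mul_neg_one, neg_smul,
      add_comm (f (i + 1) a)]
    exact add_neg_cancel _
  have hsucc : i + 1 ∈ range n := mem_range.2 hi
  have hself : i ∈ (range n).erase (i + 1) := mem_erase.2 ⟨by omega, mem_range.2 (by omega)⟩
  simp only [AddMonoidHom.finsetSum_apply, AddMonoidHom.smul_apply, ← sum_add_distrib, ← smul_add]
  rw [← sum_erase_add _ _ hsucc, ← sum_erase_add _ _ hself, add_assoc, hcancel, add_zero]
  refine H.sum_mem fun j hj ↦ H.zsmul_mem ?_ _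
  simp only [mem_erase, mem_range] at hj
  exact hH j hj.2.2 hj.1 hj.2.1 a

/-- Let `(A_n, d_i, s_i)` be a simplicial abelian group carrying a compatible symmetric
structure: each `A_n` has an `S_{n+1}`-action `g` by automorphisms whose adjacent
transpositions `t_i` satisfy the mixed relations
`d_j t_i = t_i d_j` (for `i < j−1`), `d_i t_i = d_{i+1}`, `d_j t_i = t_{i−1} d_j` (for `i > j`)
and `t_i s_i = s_i`.  Then the subgroup
`B_n = ⟨α(a) − sgn(α)·a⟩` is preserved by the boundary `∂ = Σ (−1)^i d_i`. -/
theorem boundary_preserves_sign_relations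
    (A : ℕ → Type*) [∀ n, AddCommGroup (A n)]
    (d : ∀ m : ℕ, ℕ → (A (m + 1) →+ A m))
    (g : ∀ m : ℕ, Equiv.Perm (Fin (m + 1)) → (A m →+ A m))
    -- `g` is an action by automorphisms
    (hone : ∀ m, g m 1 = AddMonoidHom.id (A m))
    (hmul : ∀ m (α β : Equiv.Perm (Fin (m + 1))), g m (α * β) = (g m α).comp (g m β))
    -- mixed relation: d_j t_i = t_i d_j for i < j − 1
    (hmix₁ : ∀ (m i j : ℕ) (h₁ : i + 1 < j) (h₂ : j ≤ m + 1),
      (d m j).comp (g (m + 1) (Equiv.swap ⟨i, by omega⟩ ⟨i + 1, by omega⟩))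
        = (g m (Equiv.swap ⟨i, by omega⟩ ⟨i + 1, by omega⟩)).comp (d m j))
    -- mixed relation: d_i t_i = d_{i+1}
    (hmix₂ : ∀ (m i : ℕ) (h : i + 1 ≤ m + 1),
      (d m i).comp (g (m + 1) (Equiv.swap ⟨i, by omega⟩ ⟨i + 1, by omega⟩)) = d m (i + 1))
    -- mixed relation: d_j t_i = t_{i−1} d_j for i > j
    (hmix₃ : ∀ (m i j : ℕ) (h₁ : j < i) (h₂ : i + 1 ≤ m + 1),
      (d m j).comp (g (m + 1) (Equiv.swap ⟨i, by omega⟩ ⟨i + 1, by omega⟩))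
        = (g m (Equiv.swap ⟨i - 1, by omega⟩ ⟨i, by omega⟩)).comp (d m j)) :
    ∀ (m : ℕ) (x : A (m + 1)),
      x ∈ AddSubgroup.closure {b : A (m + 1) | ∃ (a : A (m + 1)) (α : Equiv.Perm (Fin (m + 2))),
            b = g (m + 1) α a - ((Equiv.Perm.sign α : ℤ)) • a} →
      (∑ i ∈ Finset.range (m + 2), ((-1 : ℤ) ^ i) • d m i) x
        ∈ AddSubgroup.closure {b : A m | ∃ (a : A m) (α : Equiv.Perm (Fin (m + 1))),
            b = g m α a - ((Equiv.Perm.sign α : ℤ)) • a} := by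
  intro m x hx
  refine map_signRelations_le (g (m + 1)) _ (signRelations (g m)) ?_ ⟨x, hx, rfl⟩
  intro α a
  have hα : α ∈ Submonoid.closure (Set.range fun i : Fin (m + 1) ↦ Equiv.swap i.castSucc i.succ) :=
    by simp only [Equiv.Perm.mclosure_swap_castSucc_succ, Submonoid.mem_top]
  refine sub_units_smul_mem_of_mem_closure Equiv.Perm.sign (g (m + 1)) (hone _) (hmul _) _ _ ?_ hα a
  rintro _ ⟨i, rfl⟩ b
  rw [Equiv.Perm.sign_swap Fin.castSucc_lt_succ.ne, Units.val_neg, Units.val_one, neg_one_smul,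
    sub_neg_eq_add]
  have ht : (g (m + 1) (Equiv.swap i.castSucc i.succ)).comp
      (g (m + 1) (Equiv.swap i.castSucc i.succ)) = AddMonoidHom.id _ := by
    rw [← hmul, Equiv.swap_mul_self, hone]
  refine alternating_sum_apply_add_mem_of_comp_eq _ (d m) _ (by omega) ht (hmix₂ m i i.is_lt)
    (fun j hj hji hji' ↦ ?_) b
  rcases lt_or_gt_of_ne hji with hlt | hgt
  · exact add_mem_signRelations_of_comp_eq_swap_comp _ _ _ (by simp [Fin.ext_iff]; omega)
      (hmix₃ m i j hlt i.is_lt)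
  · exact add_mem_signRelations_of_comp_eq_swap_comp _ _ _ (by simp [Fin.ext_iff])
      (hmix₁ m i j (by omega) (by omega))
end

section
/- Let P be an extremally disconnected compact Hausdorff space. Then P is projective in the category of compact Hausdorff spaces: for any continuous f : P → A and continuous surjection g : B → A between compact Hausdorff spaces, there exists a continuous h : P → B with f = g ∘ h. -/
/-!
Form the fibre product `D = {(p, b) | f p = g b} ⊆ P × B`; by Zorn it contains a minimal closed
subset `E` still projecting onto `P`. Extremal disconnectedness of `P` forces `E → P` to be
injective, hence a homeomorphism, and its inverse followed by `D → B` is the lift. Mathlib proves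
this as `CompactT2.ExtremallyDisconnected.projective`, for spaces in a single universe; lifting
all three spaces to a common universe removes that restriction.
-/

open Function

universe u v w

instance ExtremallyDisconnected.ulift {X : Type u} [TopologicalSpace X] [ExtremallyDisconnected X] :
    ExtremallyDisconnected (ULift.{v} X) :=
  extremallyDisconnected_of_homeo Homeomorph.ulift.symm

theorem CompactT2.Projective.exists_lift_of_ulift {P : Type u} {A : Type v} {B : Type w}
    [TopologicalSpace P] [TopologicalSpace A] [TopologicalSpace B]
    [CompactSpace A] [T2Space A] [CompactSpace B] [T2Space B]
    (hP : CompactT2.Projective (ULift.{max v w} P)) {f : P → A} {g : B → A}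
    (hf : Continuous f) (hg : Continuous g) (hgsurj : Surjective g) :
    ∃ h : P → B, Continuous h ∧ g ∘ h = f := by
  obtain ⟨h, hh, hgh⟩ := hP (Y := ULift.{max u v} B) (Z := ULift.{max u w} A)
    (f := ULift.up ∘ f ∘ ULift.down) (g := ULift.up ∘ g ∘ ULift.down)
    (continuous_uliftUp.comp (hf.comp continuous_uliftDown))
    (continuous_uliftUp.comp (hg.comp continuous_uliftDown))
    (ULift.up_surjective.comp (hgsurj.comp ULift.down_surjective))
  exact ⟨ULift.down ∘ h ∘ ULift.up, continuous_uliftDown.comp (hh.comp continuous_uliftUp),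
    funext fun p => congrArg ULift.down (congrFun hgh (ULift.up p))⟩

/-- Gleason's theorem (one direction): an extremally disconnected compact Hausdorff space `P`
is projective in the category of compact Hausdorff spaces: given a continuous map `f : P → A`
and a continuous surjection `g : B → A` of compact Hausdorff spaces, there is a continuous
lift `h : P → B` with `f = g ∘ h`. -/
theorem extremallyDisconnected_projective
    {P A B : Type*} [TopologicalSpace P] [TopologicalSpace A] [TopologicalSpace B]
    [CompactSpace P] [T2Space P] [CompactSpace A] [T2Space A] [CompactSpace B] [T2Space B]
    [ExtremallyDisconnected P]
    (f : P → A) (hf : Continuous f)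
    (g : B → A) (hg : Continuous g) (hgsurj : Function.Surjective g) :
    ∃ h : P → B, Continuous h ∧ f = g ∘ h := by
  obtain ⟨h, hh, hgh⟩ :=
    CompactT2.ExtremallyDisconnected.projective.exists_lift_of_ulift hf hg hgsurj
  exact ⟨h, hh, hgh.symm⟩
end
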